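/- arXiv:1804.03808 — 3 statements merged into one kernel-verified Lean document; each statement's English description precedes it below -/
import Mathlib

section
/- Let u ≥ 3 be an integer such that u ≡ 7, 23, 57, or 73 (mod 80), or u ≡ 33, 97, 223, or 287 (mod 320). Then there is no binary sequence of period (u²+1)/2 with all nontrivial autocorrelation values equal to 1. -/
/-- A binary sequence of period `n`: values in `{-1, 1}` and `a (i + n) = a i`. -/
def IsBinarySeq (n : ℕ) (a : ℤ → ℤ) : Prop :=
  (∀ i : ℤ, a i = -1 ∨ a i = 1) ∧ ∀ i : ℤ, a (i + n) = a i

/-- The autocorrelation of `a` (period `n`) at shift `t`. -/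
def autocorr (n : ℕ) (a : ℤ → ℤ) (t : ℤ) : ℤ :=
  ∑ i ∈ Finset.range n, a i * a (i + t)

/-- All nontrivial autocorrelation values of `a` are equal to `d`. -/
def HasConstAutocorr (n : ℕ) (a : ℤ → ℤ) (d : ℤ) : Prop :=
  ∀ t : ℤ, 1 ≤ t → t ≤ (n : ℤ) - 1 → autocorr n a t = d

/-- `D` is an `(n, k, λ)` cyclic difference set in `ℤ/nℤ`. -/
def IsCDS (n k lam : ℕ) (D : Finset (ZMod n)) : Prop :=
  D.card = k ∧ ∀ g : ZMod n, g ≠ 0 →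
    ((D ×ˢ D).filter (fun q => q.1 - q.2 = g)).card = lam

/-- `a` is semiprimitive modulo `b`: some power of `a` is `≡ -1 (mod b)`. -/
def Semiprimitive (a : ℤ) (b : ℕ) : Prop :=
  ∃ c : ℕ, 0 < c ∧ Int.ModEq (b : ℤ) (a ^ c) (-1)

/-- `m` is a quadratic non-residue modulo `e`. -/
def IsQNR (m : ℤ) (e : ℕ) : Prop :=
  ¬ ((e : ℤ) ∣ m) ∧ ¬ ∃ x : ℤ, Int.ModEq (e : ℤ) m (x ^ 2)

/-!
Project a putative sequence onto `ZMod 5` (possible since `5 ∣ n`) by summing it over residue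
classes. The projected integer sequence `N` still has two-level periodic autocorrelation, with
gap `C_N(0) - C_N(t) = n - 1`. Modulo 2 such an `N` on `ZMod 5` with even gap must be constant,
so subtracting a constant and halving divides the gap by 4. Hence the gap has even 2-adic
valuation, while the congruences on `u` force `v₂(n - 1)` to be 3 or 5.
-/

open Finset

section Autocorrelation

variable {G H R : Type*} [AddCommGroup G] [Fintype G] [CommRing R]

def periodicAutocorr (x : G → R) (t : G) : R :=
  ∑ j, x j * x (j + t)

def fiberSum [AddCommGroup H] [DecidableEq H] (φ : G →+ H) (x : G → R) (h : H) : R :=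
  ∑ j with φ j = h, x j

lemma periodicAutocorr_fiberSum [AddCommGroup H] [Fintype H] [DecidableEq H] (φ : G →+ H)
    (x : G → R) (g : H) :
    periodicAutocorr (fiberSum φ x) g = ∑ t with φ t = g, periodicAutocorr x t := by
  have shift : ∀ j, fiberSum φ x (φ j + g) = ∑ t with φ t = g, x (j + t) := fun j =>
    (sum_equiv (Equiv.addLeft j) (by simp) fun _ _ => rfl).symm
  calc periodicAutocorr (fiberSum φ x) g
      = ∑ h, ∑ j with φ j = h, x j * fiberSum φ x (φ j + g) := by
        refine sum_congr rfl fun h _ => ?_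
        rw [fiberSum, sum_mul]
        exact sum_congr rfl fun j hj => by rw [(mem_filter.1 hj).2]
    _ = ∑ j, ∑ t with φ t = g, x j * x (j + t) := by
        rw [sum_fiberwise]
        simp only [shift, mul_sum]
    _ = ∑ t with φ t = g, periodicAutocorr x t := sum_comm

lemma periodicAutocorr_zero_sub_add_const (x : G → R) (c : R) (t : G) :
    periodicAutocorr (fun j => x j + c) 0 - periodicAutocorr (fun j => x j + c) t =
      periodicAutocorr x 0 - periodicAutocorr x t := by
  have hshift : ∑ j, x (j + t) = ∑ j, x j := Equiv.sum_comp (Equiv.addRight t) x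
  simp only [periodicAutocorr, add_zero, add_mul, mul_add, sum_add_distrib, ← sum_mul, ← mul_sum,
    hshift]
  ring

lemma periodicAutocorr_const_mul (c : R) (x : G → R) (t : G) :
    periodicAutocorr (fun j => c * x j) t = c ^ 2 * periodicAutocorr x t := by
  rw [periodicAutocorr, periodicAutocorr, mul_sum]
  exact sum_congr rfl fun j _ => by ring

lemma map_periodicAutocorr {S : Type*} [CommRing S] (f : R →+* S) (x : G → R) (t : G) :
    f (periodicAutocorr x t) = periodicAutocorr (f ∘ x) t := by
  simp [periodicAutocorr, map_sum, map_mul]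

end Autocorrelation

section TwoLevelGap

def HasTwoLevelGap (G : Type*) [AddCommGroup G] [Fintype G] (v : ℤ) : Prop :=
  ∃ x : G → ℤ, ∀ t ≠ 0, periodicAutocorr x 0 - periodicAutocorr x t = v

variable {G H : Type*} [AddCommGroup G] [Fintype G] [AddCommGroup H] [Fintype H]

lemma HasTwoLevelGap.of_surjective {v : ℤ} (h : HasTwoLevelGap G v)
    (φ : G →+ H) (hφ : Function.Surjective φ) : HasTwoLevelGap H v := by
  classical
  obtain ⟨x, hx⟩ := h
  set c := periodicAutocorr x 0
  have hval : ∀ t, periodicAutocorr x t = (c - v) + if t = 0 then v else 0 := by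
    intro t
    split_ifs with ht
    · rw [ht]; ring
    · linarith [hx t ht]
  refine ⟨fiberSum φ x, fun g hg => ?_⟩
  -- All fibres of `φ` have the same size, and only the fibre over `0` contains the peak `t = 0`.
  have hcard := AddMonoidHom.card_fiber_eq_of_mem_range φ (hφ 0) (hφ g)
  simp [periodicAutocorr_fiberSum, hval, sum_add_distrib, sum_ite_eq', hcard, Ne.symm hg]

end TwoLevelGap

section BinarySequence

variable {n : ℕ} {a : ℤ → ℤ}

lemma autocorr_zero_of_isBinarySeq (ha : IsBinarySeq n a) : autocorr n a 0 = n := by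
  have hsq : ∀ i, a i * a i = 1 := fun i => by
    rcases ha.1 i with h | h <;> simp [h]
  simp [autocorr, hsq]

variable [NeZero n]

lemma Function.Periodic.apply_val_intCast (ha : Function.Periodic a n) (m : ℤ) :
    a ((m : ZMod n).val) = a m := by
  rw [ZMod.val_intCast, Int.emod_def, mul_comm]
  exact ha.sub_int_mul_eq (m / n)

lemma periodicAutocorr_val_eq_autocorr (ha : Function.Periodic a n) (t : ZMod n) :
    periodicAutocorr (fun x : ZMod n => a x.val) t = autocorr n a t.val := by
  have hadd : ∀ x : ZMod n, a (x + t).val = a (x.val + t.val) := fun x => by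
    rw [← ha.apply_val_intCast (x.val + t.val)]
    simp only [Int.cast_add, Int.cast_natCast, ZMod.natCast_zmod_val]
  obtain ⟨m, rfl⟩ := Nat.exists_eq_succ_of_ne_zero (NeZero.ne n)
  simp only [periodicAutocorr, hadd, autocorr]
  exact Fin.sum_univ_eq_sum_range (fun i => a i * a (i + t.val)) (m + 1)

lemma hasTwoLevelGap_of_hasConstAutocorr {d : ℤ} (ha : IsBinarySeq n a)
    (hd : HasConstAutocorr n a d) : HasTwoLevelGap (ZMod n) (n - d) := by
  refine ⟨fun x => a x.val, fun t ht => ?_⟩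
  have hper : Function.Periodic a n := ha.2
  have hpos : 0 < t.val := (ZMod.val_pos).2 ht
  have hlt : t.val < n := ZMod.val_lt t
  rw [periodicAutocorr_val_eq_autocorr hper, periodicAutocorr_val_eq_autocorr hper, ZMod.val_zero,
    Nat.cast_zero, autocorr_zero_of_isBinarySeq ha, hd t.val (by omega) (by omega)]

end BinarySequence

section Descent

lemma eq_const_of_periodicAutocorr_eq_zmod_five (y : ZMod 5 → ZMod 2)
    (h₁ : periodicAutocorr y 0 - periodicAutocorr y 1 = 0)
    (h₂ : periodicAutocorr y 0 - periodicAutocorr y 2 = 0) : ∀ j, y j = y 0 := by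
  revert y
  unfold periodicAutocorr
  decide

lemma HasTwoLevelGap.exists_eq_four_mul {v : ℤ} (h : HasTwoLevelGap (ZMod 5) v) (hv : 2 ∣ v) :
    ∃ w, v = 4 * w ∧ HasTwoLevelGap (ZMod 5) w := by
  obtain ⟨x, hx⟩ := h
  have hx₂ : ∀ t ≠ 0, periodicAutocorr (Int.castRingHom (ZMod 2) ∘ x) 0 -
      periodicAutocorr (Int.castRingHom (ZMod 2) ∘ x) t = 0 := fun t ht => by
    rw [← map_periodicAutocorr, ← map_periodicAutocorr, ← map_sub, hx t ht, eq_intCast,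
      ZMod.intCast_zmod_eq_zero_iff_dvd]
    exact_mod_cast hv
  have hparity := eq_const_of_periodicAutocorr_eq_zmod_five _ (hx₂ 1 (by decide))
    (hx₂ 2 (by decide))
  choose z hz using fun j => (ZMod.intCast_eq_intCast_iff_dvd_sub (x 0) (x j) 2).1 (hparity j).symm
  simp only [Nat.cast_ofNat] at hz
  have hx_eq : x = fun j => 2 * z j + x 0 := funext fun j => by linarith [hz j]
  have hgap : ∀ t, periodicAutocorr x 0 - periodicAutocorr x t =
      4 * (periodicAutocorr z 0 - periodicAutocorr z t) := fun t => by
    rw [hx_eq, periodicAutocorr_zero_sub_add_const, periodicAutocorr_const_mul,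
      periodicAutocorr_const_mul]
    ring
  refine ⟨periodicAutocorr z 0 - periodicAutocorr z 1, by rw [← hgap, hx 1 (by decide)],
    z, fun t ht => ?_⟩
  have h4 : 4 * (periodicAutocorr z 0 - periodicAutocorr z t) =
      4 * (periodicAutocorr z 0 - periodicAutocorr z 1) := by
    rw [← hgap, ← hgap, hx t ht, hx 1 (by decide)]
  exact mul_left_cancel₀ four_ne_zero h4

lemma HasTwoLevelGap.two_pow_dvd {v : ℤ} (h : HasTwoLevelGap (ZMod 5) v) (j : ℕ)
    (hv : 2 ^ (2 * j + 1) ∣ v) : 2 ^ (2 * j + 2) ∣ v := by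
  induction j generalizing v with
  | zero =>
    obtain ⟨w, rfl, -⟩ := h.exists_eq_four_mul (by simpa using hv)
    exact ⟨w, by ring⟩
  | succ j ih =>
    obtain ⟨w, rfl, hw⟩ := h.exists_eq_four_mul (dvd_trans (dvd_pow_self 2 (by omega)) hv)
    rw [show (2 : ℤ) ^ (2 * (j + 1) + 1) = 4 * 2 ^ (2 * j + 1) by ring,
      mul_dvd_mul_iff_left four_ne_zero] at hv
    rw [show (2 : ℤ) ^ (2 * (j + 1) + 2) = 4 * 2 ^ (2 * j + 2) by ring]
    exact mul_dvd_mul_left 4 (ih hw hv)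

end Descent

lemma sq_mod_four_mul (u k : ℕ) : u ^ 2 % (4 * k) = (u % (2 * k)) ^ 2 % (4 * k) := by
  conv_lhs => rw [← Nat.div_add_mod u (2 * k)]
  rw [show (2 * k * (u / (2 * k)) + u % (2 * k)) ^ 2 =
      (u % (2 * k)) ^ 2 + 4 * k * (k * (u / (2 * k)) ^ 2 + u / (2 * k) * (u % (2 * k))) by ring,
    Nat.add_mul_mod_self_left]

lemma half_sq_add_one_mod (u : ℕ)
    (hmod : (u % 80 = 7 ∨ u % 80 = 23 ∨ u % 80 = 57 ∨ u % 80 = 73) ∨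
            (u % 320 = 33 ∨ u % 320 = 97 ∨ u % 320 = 223 ∨ u % 320 = 287)) :
    (u ^ 2 + 1) / 2 % 80 = 25 ∨ (u ^ 2 + 1) / 2 % 320 = 225 := by
  rcases hmod with h | h
  · have hsq := sq_mod_four_mul u 40
    rcases h with h | h | h | h <;> norm_num [h] at hsq <;> omega
  · have hsq := sq_mod_four_mul u 160
    rcases h with h | h | h | h <;> norm_num [h] at hsq <;> omega

theorem stmt4_general (u : ℕ)
    (hmod : (u % 80 = 7 ∨ u % 80 = 23 ∨ u % 80 = 57 ∨ u % 80 = 73) ∨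
            (u % 320 = 33 ∨ u % 320 = 97 ∨ u % 320 = 223 ∨ u % 320 = 287)) :
    ¬ ∃ a : ℤ → ℤ, IsBinarySeq ((u ^ 2 + 1) / 2) a ∧
        HasConstAutocorr ((u ^ 2 + 1) / 2) a 1 := by
  rintro ⟨a, ha, hd⟩
  set n := (u ^ 2 + 1) / 2
  have hn := half_sq_add_one_mod u hmod
  have h5 : 5 ∣ n := by omega
  have : NeZero n := ⟨by omega⟩
  have hgap : HasTwoLevelGap (ZMod 5) (n - 1) :=
    (hasTwoLevelGap_of_hasConstAutocorr ha hd).of_surjective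
      (ZMod.castHom h5 (ZMod 5)).toAddMonoidHom (ZMod.castHom_surjective h5)
  rcases hn with hn | hn
  · have := hgap.two_pow_dvd 1 (by norm_num; omega)
    norm_num at this
    omega
  · have := hgap.two_pow_dvd 2 (by norm_num; omega)
    norm_num at this
    omega

theorem stmt4 (u : ℕ) (hu : 3 ≤ u)
    (hmod : (u % 80 = 7 ∨ u % 80 = 23 ∨ u % 80 = 57 ∨ u % 80 = 73) ∨
            (u % 320 = 33 ∨ u % 320 = 97 ∨ u % 320 = 223 ∨ u % 320 = 287)) :
    ¬ ∃ a : ℤ → ℤ, IsBinarySeq ((u ^ 2 + 1) / 2) a ∧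
        HasConstAutocorr ((u ^ 2 + 1) / 2) a 1 :=
  stmt4_general u hmod
end

section
/- Let A ≥ 5 be an integer with A ≡ 3 (mod 24) or A ≡ 21 (mod 24). If there exists a prime p with p ≡ 2 (mod 3) such that v_p(A²-9) is odd, then there is no ((A²+3)/4, (A-1)(A-3)/8, (A-3)(A-5)/16) cyclic difference set in ℤ/((A²+3)/4)ℤ, and consequently there is no binary sequence of period (A²+3)/4 with all nontrivial autocorrelation values equal to 3. -/
/-!
Project a putative `(n, k, λ)` difference set `D ⊆ ℤ/nℤ`, `3 ∣ n`, onto `ℤ/3ℤ` and let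
`c₀, c₁, c₂` count its points in the three classes. Counting the pairs of `D` whose difference
lies in the kernel, resp. in the coset of `1`, gives `∑ cⱼ² = k + λ (n/3 - 1)` and
`∑ cⱼ cⱼ₋₁ = λ n/3`, so `k - λ = u² + uv + v²` with `u = c₀ - c₁`, `v = c₁ - c₂`. A prime
`p ≡ 2 (mod 3)` divides `u² + uv + v²` only if it divides `u` and `v` (otherwise `u/v` would have
order 3 in `(ℤ/pℤ)ˣ`), so it occurs in `u² + uv + v²` to an even power. But `A² - 9 = 16 (k - λ)`.

A `±1` sequence of period `n` with all nontrivial autocorrelations `d` is, through its set of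
`+1` positions, a difference set with `4 (k - λ) = n - d`; for `d = 3` this is again
`A² - 9 = 16 (k - λ)`.
-/

open Finset

theorem ZMod.eq_zero_of_sq_add_mul_add_sq_eq_zero {p : ℕ} [Fact p.Prime] (hp3 : p % 3 = 2)
    {x y : ZMod p} (h : x ^ 2 + x * y + y ^ 2 = 0) : y = 0 := by
  by_contra hy
  obtain ⟨z, rfl⟩ : ∃ z, x = z * y := ⟨x / y, (div_mul_cancel₀ x hy).symm⟩
  have hz : z ^ 2 + z + 1 = 0 := by
    have : (z ^ 2 + z + 1) * y ^ 2 = 0 := by linear_combination h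
    simpa [hy] using this
  have hz1 : z ≠ 1 := by
    rintro rfl
    have h3 : ((3 : ℕ) : ZMod p) = 0 := by push_cast; linear_combination hz
    rw [ZMod.natCast_eq_zero_iff, Nat.dvd_prime Nat.prime_three] at h3
    omega
  have hord : orderOf z = 3 := orderOf_eq_prime (by linear_combination (z - 1) * hz) hz1
  have hz0 : z ≠ 0 := by rintro rfl; norm_num at hz
  have := hord ▸ ZMod.orderOf_dvd_card_sub_one hz0
  omega

theorem Int.prime_dvd_of_dvd_sq_add_mul_add_sq {p : ℕ} [Fact p.Prime] (hp3 : p % 3 = 2)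
    {a b : ℤ} (h : (p : ℤ) ∣ a ^ 2 + a * b + b ^ 2) : (p : ℤ) ∣ a ∧ (p : ℤ) ∣ b := by
  have hQ : (a : ZMod p) ^ 2 + a * b + (b : ZMod p) ^ 2 = 0 := by
    exact_mod_cast (ZMod.intCast_zmod_eq_zero_iff_dvd _ p).mpr h
  have ha := ZMod.eq_zero_of_sq_add_mul_add_sq_eq_zero hp3 (x := (b : ZMod p)) (y := a)
    (by linear_combination hQ)
  have hb := ZMod.eq_zero_of_sq_add_mul_add_sq_eq_zero hp3 hQ
  exact ⟨(ZMod.intCast_zmod_eq_zero_iff_dvd a p).mp ha,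
    (ZMod.intCast_zmod_eq_zero_iff_dvd b p).mp hb⟩

theorem even_padicValNat_of_eq_sq_add_mul_add_sq {p : ℕ} [hp : Fact p.Prime] (hp3 : p % 3 = 2)
    {N : ℕ} {a b : ℤ} (h : (N : ℤ) = a ^ 2 + a * b + b ^ 2) : Even (padicValNat p N) := by
  induction N using Nat.strong_induction_on generalizing a b with
  | _ N ih =>
    by_cases hpN : p ∣ N
    swap
    · simp [padicValNat.eq_zero_of_not_dvd hpN]
    rcases N.eq_zero_or_pos with rfl | hN
    · simp
    obtain ⟨⟨a', rfl⟩, ⟨b', rfl⟩⟩ :=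
      Int.prime_dvd_of_dvd_sq_add_mul_add_sq hp3 (h ▸ Int.natCast_dvd_natCast.mpr hpN)
    obtain ⟨N', hN'⟩ : ∃ N' : ℕ, (N' : ℤ) = a' ^ 2 + a' * b' + b' ^ 2 :=
      Int.eq_ofNat_of_zero_le (by nlinarith [sq_nonneg (a' + b')]) |>.imp fun _ => Eq.symm
    have hNN' : N = p ^ 2 * N' := by
      have : (N : ℤ) = p ^ 2 * N' := by rw [h, hN']; ring
      exact_mod_cast this
    have hN'0 : N' ≠ 0 := by rintro rfl; omega
    have hlt : N' < N := by
      rw [hNN']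
      exact lt_mul_left (Nat.pos_of_ne_zero hN'0) (Nat.one_lt_pow two_ne_zero hp.out.one_lt)
    rw [hNN', padicValNat.mul (pow_ne_zero 2 hp.out.ne_zero) hN'0, padicValNat.prime_pow]
    exact even_two.add (ih N' hlt hN')

section PairCount
variable {G : Type*} [AddCommGroup G] [DecidableEq G]

theorem card_filter_sub_eq_card_filter_add_mem (D : Finset G) (t : G) :
    #{q ∈ D ×ˢ D | q.1 - q.2 = t} = #{x ∈ D | x + t ∈ D} := by
  refine card_nbij' Prod.snd (fun x => (x + t, x)) ?_ ?_ ?_ ?_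
  · rintro ⟨x, y⟩
    simp only [coe_filter, mem_product, Set.mem_ofPred_eq]
    rintro ⟨⟨hx, hy⟩, rfl⟩
    exact ⟨hy, by rwa [add_sub_cancel]⟩
  · intro x
    simp +contextual
  · rintro ⟨x, y⟩
    simp +contextual [sub_eq_iff_eq_add, add_comm t]
  · intro x _
    rfl

theorem sum_sign_mul_sign_add [Fintype G] (D : Finset G) (t : G) :
    ∑ x, (if x ∈ D then (1 : ℤ) else -1) * (if x + t ∈ D then 1 else -1)
      = Fintype.card G - 4 * #D + 4 * #{q ∈ D ×ˢ D | q.1 - q.2 = t} := by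
  have hterm : ∀ x, (if x ∈ D then (1 : ℤ) else -1) * (if x + t ∈ D then 1 else -1)
      = 1 - 2 * (if x ∈ D then 1 else 0) - 2 * (if x + t ∈ D then 1 else 0)
        + 4 * (if x ∈ D ∧ x + t ∈ D then 1 else 0) := by
    intro x; split_ifs <;> simp_all
  have hshift : ∑ x : G, (if x + t ∈ D then (1 : ℤ) else 0) = #D :=
    (Equiv.sum_comp (Equiv.addRight t) (fun x => if x ∈ D then (1 : ℤ) else 0)).trans (by simp)
  have hboth :
      ∑ x : G, (if x ∈ D ∧ x + t ∈ D then (1 : ℤ) else 0) = #{x ∈ D | x + t ∈ D} := by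
    rw [sum_boole, ← filter_filter, filter_mem_eq_inter, univ_inter]
  simp only [hterm, sum_add_distrib, sum_sub_distrib, ← mul_sum, hshift, hboth,
    card_filter_sub_eq_card_filter_add_mem]
  simp only [sum_const, card_univ, Int.nsmul_eq_mul, mul_one, sum_ite_mem, univ_inter]
  ring

theorem card_filter_sub_eq_sum_mul {α : Type*} [Fintype G] (s : Finset α) (f : α → G) (r : G) :
    #{q ∈ s ×ˢ s | f q.1 - f q.2 = r} =
      ∑ j, #{x ∈ s | f x = j} * #{x ∈ s | f x = j - r} := by
  rw [card_eq_sum_card_fiberwise (f := fun q => f q.1) (t := univ) (fun _ _ => mem_univ _)]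
  refine sum_congr rfl fun j _ => ?_
  rw [← card_product, filter_filter]
  congr 1
  ext ⟨x, y⟩
  simp only [mem_filter, mem_product]
  constructor
  · rintro ⟨⟨hx, hy⟩, hr, rfl⟩
    exact ⟨⟨hx, rfl⟩, hy, by rw [← hr]; abel⟩
  · rintro ⟨⟨hx, rfl⟩, hy, hj⟩
    exact ⟨⟨hx, hy⟩, by rw [hj]; abel, rfl⟩

end PairCount

namespace IsCDS
variable {n k lam : ℕ} {D : Finset (ZMod n)}

theorem card_filter_sub_eq (hD : IsCDS n k lam D) (g : ZMod n) :
    #{q ∈ D ×ˢ D | q.1 - q.2 = g} = if g = 0 then k else lam := by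
  split_ifs with hg
  · simp [hg, card_filter_sub_eq_card_filter_add_mem, hD.1]
  · exact hD.2 g hg

theorem card_filter_sub_mem (hD : IsCDS n k lam D) (S : Finset (ZMod n)) :
    (#{q ∈ D ×ˢ D | q.1 - q.2 ∈ S} : ℤ) =
      lam * #S + if (0 : ZMod n) ∈ S then (k : ℤ) - lam else 0 := by
  rw [card_eq_sum_card_fiberwise (s := {q ∈ D ×ˢ D | q.1 - q.2 ∈ S})
    (f := fun q => q.1 - q.2) (t := S) (fun _ hq => (mem_filter.1 hq).2)]
  have hfiber : ∀ g ∈ S, #{q ∈ {q ∈ D ×ˢ D | q.1 - q.2 ∈ S} | q.1 - q.2 = g}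
      = #{q ∈ D ×ˢ D | q.1 - q.2 = g} := fun g hg => by
    rw [filter_filter]
    exact congrArg card (filter_congr fun q _ => ⟨And.right, fun h => ⟨h ▸ hg, h⟩⟩)
  rw [sum_congr rfl hfiber]
  push_cast
  simp only [hD.card_filter_sub_eq, Nat.cast_ite]
  calc ∑ g ∈ S, (if g = 0 then (k : ℤ) else lam)
      = ∑ g ∈ S, ((lam : ℤ) + if g = 0 then (k : ℤ) - lam else 0) :=
        sum_congr rfl fun g _ => by split_ifs <;> ring
    _ = _ := by simp [sum_add_distrib, mul_comm]

theorem exists_sub_eq_sq_add_mul_add_sq [NeZero n] (hD : IsCDS n k lam D) (h3 : 3 ∣ n) :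
    ∃ a b : ℤ, (k : ℤ) - lam = a ^ 2 + a * b + b ^ 2 := by
  let φ := ZMod.castHom h3 (ZMod 3)
  let c j := #{x ∈ D | φ x = j}
  let S r := ({g | φ g = r} : Finset (ZMod n))
  have hpairs : ∀ r, (∑ j, c j * c (j - r) : ℤ) =
      lam * #(S r) + if r = 0 then (k : ℤ) - lam else 0 := by
    intro r
    have hfilter : {q ∈ D ×ˢ D | φ q.1 - φ q.2 = r} = {q ∈ D ×ˢ D | q.1 - q.2 ∈ S r} :=
      filter_congr fun q _ => by simp [S]
    have h0S : (0 : ZMod n) ∈ S r ↔ r = 0 := by simp [S, eq_comm]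
    have := hD.card_filter_sub_mem (S r)
    rw [← hfilter, card_filter_sub_eq_sum_mul] at this
    push_cast at this
    simpa only [h0S] using this
  have hS : #(S 1) = #(S 0) := by
    refine card_nbij' (· - 1) (· + 1) ?_ ?_ ?_ ?_ <;> intro g <;> simp [S, sub_eq_zero]
  have h0 := hpairs 0
  have h1 := hpairs 1
  have hsum : ∀ f : ZMod 3 → ℤ, ∑ j, f j = f 0 + f 1 + f 2 := fun f => Fin.sum_univ_three f
  have h01 : (0 : ZMod 3) - 1 = 2 := by decide
  have h21 : (2 : ZMod 3) - 1 = 1 := by decide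
  simp only [hsum, sub_zero, sub_self, h01, h21, hS, one_ne_zero, ↓reduceIte, add_zero] at h0 h1
  exact ⟨c 0 - c 1, c 1 - c 2, by linear_combination h1 - h0⟩

theorem even_padicValNat [NeZero n] (hD : IsCDS n k lam D) (h3 : 3 ∣ n) {p : ℕ} [Fact p.Prime]
    (hp3 : p % 3 = 2) {N : ℕ} {m : ℤ} (hN : (N : ℤ) = m ^ 2 * (k - lam)) :
    Even (padicValNat p N) := by
  obtain ⟨a, b, hab⟩ := hD.exists_sub_eq_sq_add_mul_add_sq h3
  exact even_padicValNat_of_eq_sq_add_mul_add_sq hp3 (a := m * a) (b := m * b)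
    (by rw [hN, hab]; ring)

end IsCDS

theorem ZMod.sum_range_natCast {M : Type*} [AddCommMonoid M] (n : ℕ) [NeZero n]
    (f : ZMod n → M) : ∑ i ∈ range n, f i = ∑ x, f x := by
  obtain ⟨m, rfl⟩ := Nat.exists_eq_succ_of_ne_zero (NeZero.ne n)
  rw [← Fin.sum_univ_eq_sum_range]
  exact Fintype.sum_congr _ _ fun x => congrArg f (ZMod.natCast_zmod_val (n := m + 1) x)

namespace IsBinarySeq
variable {n : ℕ} {a : ℤ → ℤ}

def plusSet (n : ℕ) [NeZero n] (a : ℤ → ℤ) : Finset (ZMod n) := {x | a x.val = 1}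

theorem eq_ite_mem_plusSet [NeZero n] (ha : IsBinarySeq n a) (i : ℤ) :
    a i = if (i : ZMod n) ∈ plusSet n a then 1 else -1 := by
  have hval : a (i : ZMod n).val = a i := by
    rw [ZMod.val_intCast, Int.emod_def, mul_comm]
    exact Function.Periodic.sub_int_mul_eq ha.2 _
  rcases ha.1 i with h | h <;>
    simp only [plusSet, mem_filter, mem_univ, true_and, hval, h] <;> norm_num

theorem autocorr_eq [NeZero n] (ha : IsBinarySeq n a) (t : ℤ) :
    autocorr n a t = n - 4 * #(plusSet n a)
      + 4 * #{q ∈ plusSet n a ×ˢ plusSet n a | q.1 - q.2 = (t : ZMod n)} := by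
  have := sum_sign_mul_sign_add (plusSet n a) (t : ZMod n)
  rw [ZMod.card] at this
  rw [← this, autocorr, ← ZMod.sum_range_natCast n]
  refine sum_congr rfl fun i _ => ?_
  rw [ha.eq_ite_mem_plusSet, ha.eq_ite_mem_plusSet]
  push_cast
  rfl

theorem isCDS_plusSet [NeZero n] (hn : 1 < n) (ha : IsBinarySeq n a) (d : ℤ)
    (hC : HasConstAutocorr n a d) :
    ∃ lam : ℕ, IsCDS n #(plusSet n a) lam (plusSet n a) ∧
      4 * ((#(plusSet n a) : ℤ) - lam) = n - d := by
  have hcount : ∀ g : ZMod n, g ≠ 0 →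
      4 * (#{q ∈ plusSet n a ×ˢ plusSet n a | q.1 - q.2 = g} : ℤ) =
        d - n + 4 * #(plusSet n a) := by
    intro g hg
    have hg0 : g.val ≠ 0 := (ZMod.val_ne_zero g).mpr hg
    have := hC g.val (by omega) (by have := ZMod.val_lt g; omega)
    rw [ha.autocorr_eq, Int.cast_natCast, ZMod.natCast_zmod_val] at this
    linarith
  have : Fact (1 < n) := ⟨hn⟩
  refine ⟨#{q ∈ plusSet n a ×ˢ plusSet n a | q.1 - q.2 = 1}, ⟨rfl, fun g hg => ?_⟩, ?_⟩
  · have h1 := hcount 1 one_ne_zero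
    have hg := hcount g hg
    omega
  · linarith [hcount 1 one_ne_zero]

end IsBinarySeq

theorem parameters_of_mod_24 (A : ℕ) (hA : 5 ≤ A) (hmod : A % 24 = 3 ∨ A % 24 = 21) :
    3 ∣ (A ^ 2 + 3) / 4 ∧ 1 < (A ^ 2 + 3) / 4 ∧
      ((A ^ 2 - 9 : ℕ) : ℤ) =
        4 ^ 2 * (((A - 1) * (A - 3) / 8 : ℕ) - ((A - 3) * (A - 5) / 16 : ℕ)) ∧
      ((A ^ 2 - 9 : ℕ) : ℤ) = 4 * (((A ^ 2 + 3) / 4 : ℕ) - 3) := by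
  have h9 : 9 ≤ A ^ 2 := by nlinarith
  zify [hA, h9, show 1 ≤ A by omega, show 3 ≤ A by omega]
  push_cast [Int.natCast_div]
  obtain ⟨j, rfl | rfl⟩ : ∃ j : ℕ, A = 24 * j + 3 ∨ A = 24 * j + 21 := ⟨A / 24, by omega⟩ <;>
  · clear hmod hA h9
    have := sq_nonneg (j : ℤ) -- `omega` treats `j ^ 2` as an atom
    push_cast
    ring_nf
    omega

theorem stmt13 (A : ℕ) (hA : 5 ≤ A) (hmod : A % 24 = 3 ∨ A % 24 = 21)
    (h : ∃ p : ℕ, p.Prime ∧ p % 3 = 2 ∧ Odd (padicValNat p (A ^ 2 - 9))) :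
    (¬ ∃ D : Finset (ZMod ((A ^ 2 + 3) / 4)),
        IsCDS ((A ^ 2 + 3) / 4) ((A - 1) * (A - 3) / 8) ((A - 3) * (A - 5) / 16) D) ∧
    ¬ ∃ a : ℤ → ℤ, IsBinarySeq ((A ^ 2 + 3) / 4) a ∧
        HasConstAutocorr ((A ^ 2 + 3) / 4) a 3 := by
  obtain ⟨p, hp, hp3, hodd⟩ := h
  have : Fact p.Prime := ⟨hp⟩
  obtain ⟨h3, hn, hkl, hn3⟩ := parameters_of_mod_24 A hA hmod
  have : NeZero ((A ^ 2 + 3) / 4) := ⟨by omega⟩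
  have hno : ∀ k lam : ℕ, ((A ^ 2 - 9 : ℕ) : ℤ) = 4 ^ 2 * ((k : ℤ) - lam) →
      ¬ ∃ D, IsCDS ((A ^ 2 + 3) / 4) k lam D :=
    fun k lam hN ⟨D, hD⟩ => Nat.not_even_iff_odd.mpr hodd (hD.even_padicValNat h3 hp3 hN)
  refine ⟨hno _ _ hkl, fun ⟨a, ha, hC⟩ => ?_⟩
  obtain ⟨lam, hD, hk⟩ := ha.isCDS_plusSet hn 3 hC
  exact hno _ lam (by linarith) ⟨_, hD⟩
end

section
/- For each A ∈ {61, 67, 77, 83}, there is no binary sequence of period (A²+3)/4 with all nontrivial autocorrelation values equal to 3 (i.e. there is no such sequence of period 931, 1123, 1483, or 1723). -/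
/-!
Turyn's self-conjugacy argument. Let `e > 1` divide `n` and put `β = ∑ a i ζ ^ i` in
`ℤ[ζ] = ℤ[X]/(Φₑ)`. Constant off-peak autocorrelation `d` gives `β β̄ = n - d`. If `p ^ c ≡ -1`
modulo `e`, conjugation `ζ ↦ ζ⁻¹ = ζ ^ p ^ c` agrees with the `c`-th power of Frobenius modulo
`p`; as `ℤ[ζ]/p` is reduced (`p ∤ e`), `p ∣ β β̄` forces `p ∣ β`, so `p²` can be divided out of
`β β̄ = p ^ (2k+1) m` until `p ∣ m`, a contradiction. For the four periods take `p = 2` and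
`e = 19, 1123, 1483, 1723`: `n - 3 = 2⁵·29, 2⁵·35, 2³·185, 2³·215`.
-/

open Polynomial Finset

theorem sum_range_add_of_periodic {M : Type*} [AddCancelCommMonoid M] {f : ℤ → M} {n : ℕ}
    (hf : Function.Periodic f n) (k : ℤ) :
    ∑ t ∈ range n, f (k + t) = ∑ t ∈ range n, f t := by
  have step (j : ℤ) : ∑ t ∈ range n, f (j + 1 + t) = ∑ t ∈ range n, f (j + t) := by
    have h := (sum_range_succ' (fun t : ℕ => f (j + t)) n).symm.trans
      (sum_range_succ (fun t : ℕ => f (j + t)) n)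
    simp only [Nat.cast_add, Nat.cast_one, Nat.cast_zero, add_zero, hf j] at h
    simpa only [add_assoc, add_comm (1 : ℤ)] using add_right_cancel h
  induction k using Int.induction_on with
  | zero => simp
  | succ k ih => rw [step, ih]
  | pred k ih => rw [← ih, ← step, sub_add_cancel]

theorem autocorr_zero {n : ℕ} {a : ℤ → ℤ} (ha : ∀ i, a i = -1 ∨ a i = 1) :
    autocorr n a 0 = n := by
  have h (i : ℕ) : a i * a i = 1 := by
    rcases ha i with h | h <;> simp [h]
  simp [autocorr, h]

theorem sum_autocorr_mul_pow {R : Type*} [CommRing R] {n : ℕ} {a : ℤ → ℤ}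
    (ha : ∀ i, a (i + n) = a i) {ζ ζ' : R} (hζζ' : ζ * ζ' = 1) (hζ : ζ ^ n = 1) :
    ∑ t ∈ range n, (autocorr n a t : R) * ζ ^ t
      = (∑ i ∈ range n, (a i : R) * ζ' ^ i) * ∑ j ∈ range n, (a j : R) * ζ ^ j := by
  let ω : Rˣ := Units.mkOfMulEqOne ζ ζ' hζζ'
  have hω (s : ℕ) : ((ω ^ (s : ℤ) : Rˣ) : R) = ζ ^ s := by simp [ω]
  let G : ℤ → R := fun s => a s * (ω ^ s : Rˣ)
  have hG : Function.Periodic G n := fun s => by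
    simp only [G, ha, zpow_add, zpow_natCast, show ω ^ n = 1 from Units.ext (by simpa [ω]),
      mul_one]
  have hG' (i t : ℕ) : G (i + t) = a (i + t) * (ζ ^ i * ζ ^ t) := by
    simp only [G, zpow_add, Units.val_mul, hω]
  calc ∑ t ∈ range n, (autocorr n a t : R) * ζ ^ t
      = ∑ t ∈ range n, ∑ i ∈ range n, ((a i : R) * ζ' ^ i) * G (i + t) := by
        refine sum_congr rfl fun t _ => ?_
        simp only [autocorr, Int.cast_sum, Int.cast_mul, sum_mul, hG']
        refine sum_congr rfl fun i _ => ?_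
        linear_combination (-(a i : R) * a (i + t) * ζ ^ t) * (congrArg (· ^ i) hζζ')
    _ = ∑ i ∈ range n, ((a i : R) * ζ' ^ i) * ∑ t ∈ range n, G (i + t) := by
        rw [sum_comm]; simp only [mul_sum]
    _ = _ := by
        simp only [sum_range_add_of_periodic hG, ← sum_mul, G, hω]

theorem mul_sum_eq_sub_of_hasConstAutocorr {R : Type*} [CommRing R] [IsDomain R] {n : ℕ}
    {a : ℤ → ℤ} {d : ℤ} (ha : IsBinarySeq n a) (hC : HasConstAutocorr n a d) (hn : 0 < n)
    {ζ ζ' : R} (hζζ' : ζ * ζ' = 1) (hζ : ζ ^ n = 1) (hζ1 : ζ ≠ 1) :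
    (∑ i ∈ range n, (a i : R) * ζ' ^ i) * ∑ j ∈ range n, (a j : R) * ζ ^ j = n - d := by
  obtain ⟨m, rfl⟩ : ∃ m, n = m + 1 := ⟨n - 1, by omega⟩
  have hgeom : ∑ t ∈ range (m + 1), ζ ^ t = 0 := by
    have h := geom_sum_mul ζ (m + 1)
    rw [hζ, sub_self] at h
    exact (mul_eq_zero.mp h).resolve_right (sub_ne_zero.mpr hζ1)
  have hCt (t : ℕ) (ht : t ∈ range m) :
      (autocorr (m + 1) a (t + 1 : ℕ) : R) * ζ ^ (t + 1) = d * ζ ^ (t + 1) := by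
    rw [hC _ (by omega) (by simp at ht; omega)]
  rw [← sum_autocorr_mul_pow ha.2 hζζ' hζ, sum_range_succ', sum_congr rfl hCt, ← mul_sum,
    Nat.cast_zero, autocorr_zero ha.1]
  rw [sum_range_succ'] at hgeom
  push_cast
  linear_combination (d : R) * hgeom

section Descent

variable {R : Type*} [CommRing R] {p : ℕ}
  (hred : IsReduced (R ⧸ Ideal.span {(p : R)})) {σ : R →+* R} {q : ℕ}
  (hσ : ∀ x, Ideal.Quotient.mk _ (σ x) = Ideal.Quotient.mk (Ideal.span {(p : R)}) x ^ q)
include hred hσ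

theorem dvd_of_dvd_mul_map {β : R} (h : (p : R) ∣ β * σ β) : (p : R) ∣ β := by
  rw [← Ideal.mem_span_singleton, ← Ideal.Quotient.eq_zero_iff_mem] at h ⊢
  refine IsNilpotent.eq_zero ⟨q + 1, ?_⟩
  rw [pow_succ', ← hσ, ← map_mul, h]

theorem mul_map_ne_pow_mul [IsDomain R] (hp : (p : R) ≠ 0) {m : R} (hm : ¬ (p : R) ∣ m)
    (k : ℕ) (β : R) : β * σ β ≠ p ^ (2 * k + 1) * m := by
  induction k generalizing β with
  | zero =>
    intro h
    obtain ⟨γ, rfl⟩ := dvd_of_dvd_mul_map hred hσ (h ▸ dvd_mul_of_dvd_left (by simp) m)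
    rw [map_mul, map_natCast] at h
    exact hm ⟨γ * σ γ, mul_left_cancel₀ hp (by linear_combination -h)⟩
  | succ k ih =>
    intro h
    obtain ⟨γ, rfl⟩ := dvd_of_dvd_mul_map hred hσ (h ▸ dvd_mul_of_dvd_left (by simp) m)
    rw [map_mul, map_natCast] at h
    exact ih γ (mul_left_cancel₀ (pow_ne_zero 2 hp) (by linear_combination h))

end Descent

namespace AdjoinRoot

theorem of_dvd_of_iff {R : Type*} [CommRing R] {f : R[X]} (hf : f.Monic) (hf0 : f.natDegree ≠ 0)
    {r s : R} : of f s ∣ of f r ↔ s ∣ r := by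
  refine ⟨fun ⟨y, hy⟩ => ?_, map_dvd (of f)⟩
  let b := (powerBasis' hf).basis
  let i₀ : Fin (powerBasis' hf).dim := ⟨0, Nat.pos_of_ne_zero hf0⟩
  have hb : b i₀ = 1 := by simp [b, i₀]
  rw [← algebraMap_eq, Algebra.algebraMap_eq_smul_one, ← Algebra.smul_def, ← hb] at hy
  have := congrArg (fun x => b.repr x i₀) hy
  simp only [map_smul, Module.Basis.repr_self, Finsupp.smul_apply, Finsupp.single_eq_same,
    smul_eq_mul, mul_one] at this
  exact ⟨_, this⟩

theorem isReduced_quotient_map_of_squarefree {R : Type*} [CommRing R] (f : R[X]) (I : Ideal R)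
    [I.IsMaximal] (hf : Squarefree (f.map (Ideal.Quotient.mk I))) :
    IsReduced (AdjoinRoot f ⧸ I.map (of f)) := by
  let := Ideal.Quotient.field I
  have : IsReduced ((R ⧸ I)[X] ⧸ Ideal.span {f.map (Ideal.Quotient.mk I)}) :=
    (Ideal.isRadical_iff_quotient_reduced _).mp (isRadical_iff_span_singleton.mp hf.isRadical)
  exact isReduced_of_injective (quotEquivQuotMap f I).toRingHom (quotEquivQuotMap f I).injective

theorem map_apply_eq_pow {f : ℤ[X]} {S : Type*} [CommRing S] {p : ℕ} [ExpChar S p] {c : ℕ}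
    {σ : AdjoinRoot f →+* AdjoinRoot f} (hσ : σ (root f) = root f ^ p ^ c)
    (π : AdjoinRoot f →+* S) (x : AdjoinRoot f) : π (σ x) = π x ^ p ^ c := by
  have : π.comp σ = (iterateFrobenius S p c).comp π :=
    ringHom_ext (RingHom.ext_int _ _) (by simp [hσ, iterateFrobenius_def])
  simpa [iterateFrobenius_def] using congrArg (· x) this

variable {e : ℕ}

theorem isReduced_quotient_span_natCast_cyclotomic {p : ℕ} [Fact p.Prime] (hpe : ¬ p ∣ e) :
    IsReduced (AdjoinRoot (cyclotomic e ℤ) ⧸ Ideal.span {(p : AdjoinRoot (cyclotomic e ℤ))}) := by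
  have := Int.ideal_span_isMaximal_of_prime p
  let := Ideal.Quotient.field (Ideal.span {(p : ℤ)})
  have : NeZero (e : ℤ ⧸ Ideal.span {(p : ℤ)}) := ⟨by
    rw [← map_natCast (Ideal.Quotient.mk _), Ne, Ideal.Quotient.eq_zero_iff_mem,
      Ideal.mem_span_singleton]
    exact_mod_cast hpe⟩
  have h := isReduced_quotient_map_of_squarefree (cyclotomic e ℤ) (Ideal.span {(p : ℤ)})
    (by rw [map_cyclotomic]; exact squarefree_cyclotomic e _)
  rwa [Ideal.map_span, Set.image_singleton, map_natCast] at h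

variable [NeZero e]

instance : IsDomain (AdjoinRoot (cyclotomic e ℤ)) :=
  isDomain_of_prime (cyclotomic.irreducible (NeZero.pos e)).prime

instance : CharZero (AdjoinRoot (cyclotomic e ℤ)) :=
  charZero_of_injective_algebraMap
    (of.injective_of_degree_ne_zero (degree_cyclotomic_pos e ℤ (NeZero.pos e)).ne')

theorem intCast_dvd_intCast_iff_cyclotomic {r s : ℤ} :
    (s : AdjoinRoot (cyclotomic e ℤ)) ∣ r ↔ s ∣ r := by
  simpa using of_dvd_of_iff (cyclotomic.monic e ℤ) (r := r) (s := s)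
    (natDegree_pos_iff_degree_pos.mpr (degree_cyclotomic_pos e ℤ (NeZero.pos e))).ne'

theorem isPrimitiveRoot_root_cyclotomic : IsPrimitiveRoot (root (cyclotomic e ℤ)) e := by
  rw [← isRoot_cyclotomic_iff, ← map_cyclotomic e (of (cyclotomic e ℤ)), IsRoot, eval_map,
    eval₂_root]

theorem exists_ringHom_root_cyclotomic_eq_pow {k : ℕ} (hk : k.Coprime e) :
    ∃ σ : AdjoinRoot (cyclotomic e ℤ) →+* AdjoinRoot (cyclotomic e ℤ),
      σ (root _) = root _ ^ k := by
  have h := isPrimitiveRoot_root_cyclotomic.pow_of_coprime k hk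
  rw [← isRoot_cyclotomic_iff, ← map_cyclotomic e (Int.castRingHom (AdjoinRoot (cyclotomic e ℤ))),
    IsRoot, eval_map] at h
  exact ⟨lift _ _ h, lift_root h⟩

end AdjoinRoot

open AdjoinRoot in
theorem not_exists_hasConstAutocorr_of_semiprimitive {n e p k : ℕ} {d m : ℤ} [hp : Fact p.Prime]
    (hn : 0 < n) (he : 1 < e) (hen : e ∣ n) (hsemi : Semiprimitive p e)
    (hnd : (n : ℤ) - d = p ^ (2 * k + 1) * m) (hm : ¬ (p : ℤ) ∣ m) :
    ¬ ∃ a : ℤ → ℤ, IsBinarySeq n a ∧ HasConstAutocorr n a d := by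
  rintro ⟨a, ha, hC⟩
  have : NeZero e := ⟨by omega⟩
  obtain ⟨c, hc, hpc⟩ := hsemi
  have hdvd : e ∣ p ^ c + 1 := by
    exact_mod_cast (by simpa using hpc.symm.dvd : (e : ℤ) ∣ p ^ c + 1)
  have hcop : (p ^ c).Coprime e :=
    Nat.Coprime.coprime_dvd_right hdvd (Nat.coprime_self_add_right.mpr (Nat.coprime_one_right _))
  have hpe : ¬ p ∣ e :=
    (Nat.Prime.coprime_iff_not_dvd hp.out).mp (hcop.coprime_dvd_left (dvd_pow_self p hc.ne'))
  obtain ⟨σ, hσ⟩ := exists_ringHom_root_cyclotomic_eq_pow hcop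
  set R := AdjoinRoot (cyclotomic e ℤ)
  set ζ : R := root (cyclotomic e ℤ)
  have hζ : IsPrimitiveRoot ζ e := isPrimitiveRoot_root_cyclotomic
  have hζζ' : ζ * ζ ^ p ^ c = 1 := by rw [← pow_succ', hζ.pow_eq_one_iff_dvd]; exact hdvd
  set β := ∑ j ∈ range n, (a j : R) * ζ ^ j
  have hσβ : σ β = ∑ i ∈ range n, (a i : R) * (ζ ^ p ^ c) ^ i := by simp [β, hσ]
  have hp1 : ¬ IsUnit (p : R) := fun h => by
    have := intCast_dvd_intCast_iff_cyclotomic.mp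
      (show ((p : ℤ) : R) ∣ ((1 : ℤ) : R) by simpa using isUnit_iff_dvd_one.mp h)
    exact hp.out.one_lt.ne' (by exact_mod_cast Int.eq_one_of_dvd_one (by positivity) this)
  have := CharP.quotient R p hp1
  refine mul_map_ne_pow_mul (isReduced_quotient_span_natCast_cyclotomic hpe)
    (map_apply_eq_pow hσ (Ideal.Quotient.mk _)) (by exact_mod_cast hp.out.ne_zero)
    (m := m) (by exact_mod_cast mt intCast_dvd_intCast_iff_cyclotomic.mp hm) k β ?_
  rw [hσβ, mul_comm, mul_sum_eq_sub_of_hasConstAutocorr ha hC hn hζζ'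
    ((hζ.pow_eq_one_iff_dvd n).mpr hen) (hζ.ne_one he)]
  exact_mod_cast hnd

theorem stmt17 (A : ℕ) (hA : A = 61 ∨ A = 67 ∨ A = 77 ∨ A = 83) :
    ¬ ∃ a : ℤ → ℤ, IsBinarySeq ((A ^ 2 + 3) / 4) a ∧
        HasConstAutocorr ((A ^ 2 + 3) / 4) a 3 := by
  rcases hA with rfl | rfl | rfl | rfl
  · exact not_exists_hasConstAutocorr_of_semiprimitive (p := 2) (e := 19) (k := 2) (m := 29)
      (by norm_num) (by norm_num) (by norm_num) ⟨9, by norm_num, by decide +kernel⟩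
      (by norm_num) (by decide)
  · exact not_exists_hasConstAutocorr_of_semiprimitive (p := 2) (e := 1123) (k := 2) (m := 35)
      (by norm_num) (by norm_num) (by norm_num) ⟨561, by norm_num, by decide +kernel⟩
      (by norm_num) (by decide)
  · exact not_exists_hasConstAutocorr_of_semiprimitive (p := 2) (e := 1483) (k := 1) (m := 185)
      (by norm_num) (by norm_num) (by norm_num) ⟨741, by norm_num, by decide +kernel⟩
      (by norm_num) (by decide)
  · exact not_exists_hasConstAutocorr_of_semiprimitive (p := 2) (e := 1723) (k := 1) (m := 215)
      (by norm_num) (by norm_num) (by norm_num) ⟨287, by norm_num, by decide +kernel⟩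
      (by norm_num) (by decide)
end
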